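/- arXiv:2501.00498 — 2 statements merged into one kernel-verified Lean document; each statement's English description precedes it below -/
import Mathlib

section
/- Boethius' thesis (α → β) → ∼(α → ∼β) is provable in the sequent calculus sC, i.e., the sequent ⇒ (α → β) → ∼(α → ∼β) is derivable for all formulas α, β. -/
inductive Fm : Type
  | var : ℕ → Fm
  | conj : Fm → Fm → Fm
  | disj : Fm → Fm → Fm
  | impl : Fm → Fm → Fm
  | neg : Fm → Fm
  deriving DecidableEq

open Fm

/-- Optional rules: cut, (ex-middle), (Peirce), (g-ex-middle), (at-ex-middle). -/
structure Rules where
  cut : Bool := false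
  exMid : Bool := false
  peirce : Bool := false
  gem : Bool := false
  atEx : Bool := false

/-- The sequent calculus sC for Wansing's connexive logic C, with optional extra rules. -/
inductive SC (R : Rules) : Finset Fm → Fm → Prop
  | init1 (p : ℕ) (Γ : Finset Fm) : SC R (insert (var p) Γ) (var p)
  | init2 (p : ℕ) (Γ : Finset Fm) : SC R (insert (neg (var p)) Γ) (neg (var p))
  | cut {Γ Δ : Finset Fm} {a c : Fm} : R.cut = true →
      SC R Γ a → SC R (insert a Δ) c → SC R (Γ ∪ Δ) c
  | implL {Γ Δ : Finset Fm} {a b c : Fm} :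
      SC R Γ a → SC R (insert b Δ) c → SC R (insert (impl a b) (Γ ∪ Δ)) c
  | implR {Γ : Finset Fm} {a b : Fm} :
      SC R (insert a Γ) b → SC R Γ (impl a b)
  | conjL {Γ : Finset Fm} {a b c : Fm} :
      SC R (insert a (insert b Γ)) c → SC R (insert (conj a b) Γ) c
  | conjR {Γ : Finset Fm} {a b : Fm} :
      SC R Γ a → SC R Γ b → SC R Γ (conj a b)
  | disjL {Γ : Finset Fm} {a b c : Fm} :
      SC R (insert a Γ) c → SC R (insert b Γ) c → SC R (insert (disj a b) Γ) c
  | disjR1 {Γ : Finset Fm} {a b : Fm} : SC R Γ a → SC R Γ (disj a b)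
  | disjR2 {Γ : Finset Fm} {a b : Fm} : SC R Γ b → SC R Γ (disj a b)
  | negnegL {Γ : Finset Fm} {a c : Fm} :
      SC R (insert a Γ) c → SC R (insert (neg (neg a)) Γ) c
  | negnegR {Γ : Finset Fm} {a : Fm} : SC R Γ a → SC R Γ (neg (neg a))
  | negimplL {Γ Δ : Finset Fm} {a b c : Fm} :
      SC R Γ a → SC R (insert (neg b) Δ) c → SC R (insert (neg (impl a b)) (Γ ∪ Δ)) c
  | negimplR {Γ : Finset Fm} {a b : Fm} :
      SC R (insert a Γ) (neg b) → SC R Γ (neg (impl a b))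
  | negconjL {Γ : Finset Fm} {a b c : Fm} :
      SC R (insert (neg a) Γ) c → SC R (insert (neg b) Γ) c →
      SC R (insert (neg (conj a b)) Γ) c
  | negconjR1 {Γ : Finset Fm} {a b : Fm} : SC R Γ (neg a) → SC R Γ (neg (conj a b))
  | negconjR2 {Γ : Finset Fm} {a b : Fm} : SC R Γ (neg b) → SC R Γ (neg (conj a b))
  | negdisjL {Γ : Finset Fm} {a b c : Fm} :
      SC R (insert (neg a) (insert (neg b) Γ)) c → SC R (insert (neg (disj a b)) Γ) c
  | negdisjR {Γ : Finset Fm} {a b : Fm} :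
      SC R Γ (neg a) → SC R Γ (neg b) → SC R Γ (neg (disj a b))
  | exMid {Γ : Finset Fm} {a c : Fm} : R.exMid = true →
      SC R (insert (neg a) Γ) c → SC R (insert a Γ) c → SC R Γ c
  | peirce {Γ : Finset Fm} {a b : Fm} : R.peirce = true →
      SC R (insert (impl a b) Γ) a → SC R Γ a
  | gem {Γ : Finset Fm} {a b c : Fm} : R.gem = true →
      SC R (insert (impl a b) Γ) c → SC R (insert a Γ) c → SC R Γ c
  | atEx {Γ : Finset Fm} {p : ℕ} {c : Fm} : R.atEx = true →
      SC R (insert (neg (var p)) Γ) c → SC R (insert (var p) Γ) c → SC R Γ c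

/-- sC (with cut). -/
def sC : Rules := { cut := true }
/-- cut-free sC. -/
def sCcf : Rules := {}
/-- sC3 = sC + (ex-middle). -/
def sC3 : Rules := { cut := true, exMid := true }
/-- sMC = sC + (Peirce). -/
def sMC : Rules := { cut := true, peirce := true }
/-- sMC* = sC + (g-ex-middle). -/
def sMCstar : Rules := { cut := true, gem := true }

namespace SC

variable {R : Rules}

/-- Identity has to be proved for `a` and `∼a` simultaneously: the rules for a negated
connective decompose `∼a` into negated subformulas of `a`. -/
theorem refl_and_neg_refl (a : Fm) (Γ : Finset Fm) :
    SC R (insert a Γ) a ∧ SC R (insert (neg a) Γ) (neg a) := by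
  induction a generalizing Γ with
  | var p => exact ⟨init1 p Γ, init2 p Γ⟩
  | conj a b iha ihb =>
    refine ⟨conjL (conjR (iha _).1 ?_), negconjL (negconjR1 (iha Γ).2) (negconjR2 (ihb Γ).2)⟩
    rw [Finset.insert_comm]
    exact (ihb _).1
  | disj a b iha ihb =>
    refine ⟨disjL (disjR1 (iha Γ).1) (disjR2 (ihb Γ).1), negdisjL (negdisjR (iha _).2 ?_)⟩
    rw [Finset.insert_comm]
    exact (ihb _).2
  | impl a b iha ihb =>
    constructor
    · refine implR ?_
      rw [Finset.insert_comm, ← Finset.union_self (insert a Γ)]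
      exact implL (iha Γ).1 (ihb _).1
    · refine negimplR ?_
      rw [Finset.insert_comm, ← Finset.union_self (insert a Γ)]
      exact negimplL (iha Γ).1 (ihb _).2
  | neg a iha => exact ⟨(iha Γ).2, negnegL (negnegR (iha Γ).1)⟩

theorem refl (a : Fm) (Γ : Finset Fm) : SC R (insert a Γ) a :=
  (refl_and_neg_refl a Γ).1

theorem modus_ponens (a b : Fm) (Γ : Finset Fm) : SC R (insert (impl a b) (insert a Γ)) b := by
  rw [← Finset.union_self (insert a Γ)]
  exact implL (refl a Γ) (refl b _)

end SC

/-- Boethius' thesis (α → β) → ∼(α → ∼β) is provable in sC. -/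
theorem stmt2 (α β : Fm) : SC sC ∅ (impl (impl α β) (neg (impl α (neg β)))) := by
  refine SC.implR (SC.negimplR (SC.negnegR ?_))
  rw [Finset.insert_comm]
  exact SC.modus_ponens α β ∅
end

section
/- The natural deduction system nC and the sequent calculus sC are equivalent: a formula α is provable in nC (has a derivation with no open assumptions ending in α) if and only if the sequent ⇒ α is provable in sC. -/
open Fm

/-- The natural deduction system nC: NC Γ β means there is a derivation in nC with
open assumptions exactly Γ and end-formula β. -/
inductive NC : Finset Fm → Fm → Prop
  | ass (a : Fm) : NC {a} a
  | impI (a : Fm) {Γ : Finset Fm} {b : Fm} : NC Γ b → NC (Γ.erase a) (impl a b)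
  | impE {Γ Δ : Finset Fm} {a b : Fm} : NC Γ (impl a b) → NC Δ a → NC (Γ ∪ Δ) b
  | conjI {Γ Δ : Finset Fm} {a b : Fm} : NC Γ a → NC Δ b → NC (Γ ∪ Δ) (conj a b)
  | conjE1 {Γ : Finset Fm} {a b : Fm} : NC Γ (conj a b) → NC Γ a
  | conjE2 {Γ : Finset Fm} {a b : Fm} : NC Γ (conj a b) → NC Γ b
  | disjI1 {Γ : Finset Fm} {a b : Fm} : NC Γ a → NC Γ (disj a b)
  | disjI2 {Γ : Finset Fm} {a b : Fm} : NC Γ b → NC Γ (disj a b)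
  | disjE {Γ Δ Θ : Finset Fm} {a b c : Fm} :
      NC Γ (disj a b) → NC Δ c → NC Θ c → NC ((Γ ∪ Δ.erase a) ∪ Θ.erase b) c
  | negnegI {Γ : Finset Fm} {a : Fm} : NC Γ a → NC Γ (neg (neg a))
  | negnegE {Γ : Finset Fm} {a : Fm} : NC Γ (neg (neg a)) → NC Γ a
  | negimpI (a : Fm) {Γ : Finset Fm} {b : Fm} :
      NC Γ (neg b) → NC (Γ.erase a) (neg (impl a b))
  | negimpE {Γ Δ : Finset Fm} {a b : Fm} :
      NC Γ (neg (impl a b)) → NC Δ a → NC (Γ ∪ Δ) (neg b)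
  | negconjI1 {Γ : Finset Fm} {a b : Fm} : NC Γ (neg a) → NC Γ (neg (conj a b))
  | negconjI2 {Γ : Finset Fm} {a b : Fm} : NC Γ (neg b) → NC Γ (neg (conj a b))
  | negconjE {Γ Δ Θ : Finset Fm} {a b c : Fm} :
      NC Γ (neg (conj a b)) → NC Δ c → NC Θ c →
      NC ((Γ ∪ Δ.erase (neg a)) ∪ Θ.erase (neg b)) c
  | negdisjI {Γ Δ : Finset Fm} {a b : Fm} :
      NC Γ (neg a) → NC Δ (neg b) → NC (Γ ∪ Δ) (neg (disj a b))
  | negdisjE1 {Γ : Finset Fm} {a b : Fm} : NC Γ (neg (disj a b)) → NC Γ (neg a)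
  | negdisjE2 {Γ : Finset Fm} {a b : Fm} : NC Γ (neg (disj a b)) → NC Γ (neg b)

section Aux

/-- Weakening for SC. -/
lemma scMono {R : Rules} {Γ : Finset Fm} {c : Fm} (h : SC R Γ c) :
    ∀ {Δ : Finset Fm}, Γ ⊆ Δ → SC R Δ c := by
  induction h with
  | init1 p Γ =>
    intro Δ hΔ
    have hm : Fm.var p ∈ Δ := hΔ (Finset.mem_insert_self _ _)
    have : insert (Fm.var p) Δ = Δ := Finset.insert_eq_self.mpr hm
    exact this ▸ SC.init1 p Δ
  | init2 p Γ =>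
    intro Δ hΔ
    have hm : Fm.neg (Fm.var p) ∈ Δ := hΔ (Finset.mem_insert_self _ _)
    have : insert (Fm.neg (Fm.var p)) Δ = Δ := Finset.insert_eq_self.mpr hm
    exact this ▸ SC.init2 p Δ
  | cut hr h1 h2 ih1 ih2 =>
    intro Δ hΔ
    have := SC.cut hr (ih1 (le_trans Finset.subset_union_left hΔ))
      (ih2 (Finset.insert_subset_insert _ (le_trans Finset.subset_union_right hΔ)))
    simpa using this
  | implL h1 h2 ih1 ih2 =>
    intro Δ hΔ
    rw [Finset.insert_subset_iff] at hΔ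
    obtain ⟨hm, hsub⟩ := hΔ
    have := SC.implL (ih1 (le_trans Finset.subset_union_left hsub))
      (ih2 (Finset.insert_subset_insert _ (le_trans Finset.subset_union_right hsub)))
    simp only [Finset.union_self] at this
    rwa [Finset.insert_eq_self.mpr hm] at this
  | implR h ih =>
    intro Δ hΔ
    exact SC.implR (ih (Finset.insert_subset_insert _ hΔ))
  | conjL h ih =>
    intro Δ hΔ
    rw [Finset.insert_subset_iff] at hΔ
    obtain ⟨hm, hsub⟩ := hΔ
    have := SC.conjL (Γ := Δ) (ih (Finset.insert_subset_insert _
      (Finset.insert_subset_insert _ hsub)))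
    rwa [Finset.insert_eq_self.mpr hm] at this
  | conjR h1 h2 ih1 ih2 =>
    intro Δ hΔ
    exact SC.conjR (ih1 hΔ) (ih2 hΔ)
  | disjL h1 h2 ih1 ih2 =>
    intro Δ hΔ
    rw [Finset.insert_subset_iff] at hΔ
    obtain ⟨hm, hsub⟩ := hΔ
    have := SC.disjL (ih1 (Finset.insert_subset_insert _ hsub))
      (ih2 (Finset.insert_subset_insert _ hsub))
    rwa [Finset.insert_eq_self.mpr hm] at this
  | disjR1 h ih => intro Δ hΔ; exact SC.disjR1 (ih hΔ)
  | disjR2 h ih => intro Δ hΔ; exact SC.disjR2 (ih hΔ)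
  | negnegL h ih =>
    intro Δ hΔ
    rw [Finset.insert_subset_iff] at hΔ
    obtain ⟨hm, hsub⟩ := hΔ
    have := SC.negnegL (Γ := Δ) (ih (Finset.insert_subset_insert _ hsub))
    rwa [Finset.insert_eq_self.mpr hm] at this
  | negnegR h ih => intro Δ hΔ; exact SC.negnegR (ih hΔ)
  | negimplL h1 h2 ih1 ih2 =>
    intro Δ hΔ
    rw [Finset.insert_subset_iff] at hΔ
    obtain ⟨hm, hsub⟩ := hΔ
    have := SC.negimplL (ih1 (le_trans Finset.subset_union_left hsub))
      (ih2 (Finset.insert_subset_insert _ (le_trans Finset.subset_union_right hsub)))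
    simp only [Finset.union_self] at this
    rwa [Finset.insert_eq_self.mpr hm] at this
  | negimplR h ih =>
    intro Δ hΔ
    exact SC.negimplR (ih (Finset.insert_subset_insert _ hΔ))
  | negconjL h1 h2 ih1 ih2 =>
    intro Δ hΔ
    rw [Finset.insert_subset_iff] at hΔ
    obtain ⟨hm, hsub⟩ := hΔ
    have := SC.negconjL (ih1 (Finset.insert_subset_insert _ hsub))
      (ih2 (Finset.insert_subset_insert _ hsub))
    rwa [Finset.insert_eq_self.mpr hm] at this
  | negconjR1 h ih => intro Δ hΔ; exact SC.negconjR1 (ih hΔ)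
  | negconjR2 h ih => intro Δ hΔ; exact SC.negconjR2 (ih hΔ)
  | negdisjL h ih =>
    intro Δ hΔ
    rw [Finset.insert_subset_iff] at hΔ
    obtain ⟨hm, hsub⟩ := hΔ
    have := SC.negdisjL (Γ := Δ) (ih (Finset.insert_subset_insert _
      (Finset.insert_subset_insert _ hsub)))
    rwa [Finset.insert_eq_self.mpr hm] at this
  | negdisjR h1 h2 ih1 ih2 =>
    intro Δ hΔ
    exact SC.negdisjR (ih1 hΔ) (ih2 hΔ)
  | exMid hr h1 h2 ih1 ih2 =>
    intro Δ hΔ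
    exact SC.exMid hr (ih1 (Finset.insert_subset_insert _ hΔ))
      (ih2 (Finset.insert_subset_insert _ hΔ))
  | peirce hr h ih =>
    intro Δ hΔ
    exact SC.peirce hr (ih (Finset.insert_subset_insert _ hΔ))
  | gem hr h1 h2 ih1 ih2 =>
    intro Δ hΔ
    exact SC.gem hr (ih1 (Finset.insert_subset_insert _ hΔ))
      (ih2 (Finset.insert_subset_insert _ hΔ))
  | atEx hr h1 h2 ih1 ih2 =>
    intro Δ hΔ
    exact SC.atEx hr (ih1 (Finset.insert_subset_insert _ hΔ))
      (ih2 (Finset.insert_subset_insert _ hΔ))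

/-- Size of a formula, for termination of the identity lemma. -/
def Fm.sz : Fm → ℕ
  | var _ => 1
  | conj a b => a.sz + b.sz + 1
  | disj a b => a.sz + b.sz + 1
  | impl a b => a.sz + b.sz + 1
  | neg a => a.sz + 1

/-- General identity: insert a Γ ⇒ a. -/
theorem scId {R : Rules} : ∀ (a : Fm) (Γ : Finset Fm), SC R (insert a Γ) a
  | Fm.var p, Γ => .init1 p Γ
  | Fm.conj a b, Γ => by
      apply SC.conjL
      refine SC.conjR (scId a _) ?_
      rw [Finset.insert_comm]
      exact scId b _
  | Fm.disj a b, Γ => .disjL (.disjR1 (scId a Γ)) (.disjR2 (scId b Γ))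
  | Fm.impl a b, Γ => by
      apply SC.implR
      rw [Finset.insert_comm]
      have := SC.implL (R := R) (scId a Γ) (scId b (insert a Γ))
      simpa [Finset.union_self] using this
  | Fm.neg (var p), Γ => .init2 p Γ
  | Fm.neg (conj a b), Γ =>
      .negconjL (.negconjR1 (scId (neg a) Γ)) (.negconjR2 (scId (neg b) Γ))
  | Fm.neg (disj a b), Γ => by
      apply SC.negdisjL
      refine SC.negdisjR (scId (neg a) _) ?_
      rw [Finset.insert_comm]
      exact scId (neg b) _
  | Fm.neg (Fm.impl a b), Γ => by
      apply SC.negimplR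
      rw [Finset.insert_comm]
      have := SC.negimplL (R := R) (scId a Γ) (scId (neg b) (insert a Γ))
      simpa [Finset.union_self] using this
  | Fm.neg (neg a), Γ => .negnegL (.negnegR (scId a Γ))
  termination_by a _ => a.sz
  decreasing_by all_goals (simp [Fm.sz] <;> omega)

lemma scCut {Γ Δ : Finset Fm} {a c : Fm} (h1 : SC sC Γ a) (h2 : SC sC (insert a Δ) c) :
    SC sC (Γ ∪ Δ) c := SC.cut rfl h1 h2

lemma scCut0 {Γ : Finset Fm} {a c : Fm} (h1 : SC sC Γ a) (h2 : SC sC (insert a ∅) c) :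
    SC sC Γ c := by simpa using scCut h1 h2

/-- Weakening by a single formula in NC. -/
lemma ncInsert {Γ : Finset Fm} {a : Fm} (c : Fm) (h : NC Γ a) : NC (insert c Γ) a := by
  have := NC.conjE2 (NC.conjI (NC.ass c) h)
  rwa [Finset.insert_eq]

lemma ncUnion {Γ : Finset Fm} {a : Fm} (Δ : Finset Fm) (h : NC Γ a) : NC (Γ ∪ Δ) a := by
  induction Δ using Finset.induction with
  | empty => simpa using h
  | @insert x Δ hx ih =>
    have := ncInsert x ih
    simpa [Finset.union_insert] using this

/-- Weakening for NC. -/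
lemma ncMono {Γ Δ : Finset Fm} {a : Fm} (h : NC Γ a) (hs : Γ ⊆ Δ) : NC Δ a := by
  have := ncUnion Δ h
  rwa [Finset.union_eq_right.mpr hs] at this

/-- Cut for NC. -/
lemma ncCut {Γ Δ : Finset Fm} {b c : Fm} (h1 : NC Γ b) (h2 : NC Δ c) :
    NC (Γ ∪ Δ.erase b) c := by
  have h3 := NC.impI b h2
  have := NC.impE h3 h1
  simpa [Finset.union_comm] using this

lemma ncCutInsert {Γ Δ : Finset Fm} {b c : Fm} (h1 : NC Γ b) (h2 : NC (insert b Δ) c) :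
    NC (Γ ∪ Δ) c := by
  refine ncMono (ncCut h1 h2) ?_
  intro x hx
  simp only [Finset.mem_union, Finset.mem_erase, Finset.mem_insert] at hx ⊢
  tauto

theorem nc_to_sc {Γ : Finset Fm} {α : Fm} (h : NC Γ α) : SC sC Γ α := by
  induction h with
  | ass a => simpa using scId a ∅
  | impI a h ih =>
    refine SC.implR (scMono ih ?_)
    intro x hx
    simp only [Finset.mem_insert, Finset.mem_erase]
    tauto
  | @impE Γ Δ a b h1 h2 ih1 ih2 =>
    have k : SC sC (insert (impl a b) Δ) b := by
      have := SC.implL ih2 (scId b ∅)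
      simpa using this
    exact scCut ih1 k
  | conjI h1 h2 ih1 ih2 =>
    exact SC.conjR (scMono ih1 Finset.subset_union_left)
      (scMono ih2 Finset.subset_union_right)
  | @conjE1 Γ a b h ih =>
    exact scCut0 ih (SC.conjL (scId a _))
  | @conjE2 Γ a b h ih =>
    refine scCut0 ih (SC.conjL ?_)
    rw [Finset.insert_comm]
    exact scId b _
  | disjI1 h ih => exact SC.disjR1 ih
  | disjI2 h ih => exact SC.disjR2 ih
  | @disjE Γ Δ Θ a b c h1 h2 h3 ih1 ih2 ih3 =>
    have l1 : SC sC (insert a (Δ.erase a ∪ Θ.erase b)) c := by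
      refine scMono ih2 ?_
      intro x hx
      simp only [Finset.mem_insert, Finset.mem_union, Finset.mem_erase]
      tauto
    have l2 : SC sC (insert b (Δ.erase a ∪ Θ.erase b)) c := by
      refine scMono ih3 ?_
      intro x hx
      simp only [Finset.mem_insert, Finset.mem_union, Finset.mem_erase]
      tauto
    have l3 := SC.disjL l1 l2
    have l4 := scCut ih1 l3
    refine scMono l4 ?_
    intro x hx
    simp only [Finset.mem_union] at hx ⊢
    tauto
  | negnegI h ih => exact SC.negnegR ih
  | @negnegE Γ a h ih =>
    exact scCut0 ih (SC.negnegL (scId a _))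
  | negimpI a h ih =>
    refine SC.negimplR (scMono ih ?_)
    intro x hx
    simp only [Finset.mem_insert, Finset.mem_erase]
    tauto
  | @negimpE Γ Δ a b h1 h2 ih1 ih2 =>
    have k : SC sC (insert (neg (impl a b)) Δ) (neg b) := by
      have := SC.negimplL ih2 (scId (neg b) ∅)
      simpa using this
    exact scCut ih1 k
  | negconjI1 h ih => exact SC.negconjR1 ih
  | negconjI2 h ih => exact SC.negconjR2 ih
  | @negconjE Γ Δ Θ a b c h1 h2 h3 ih1 ih2 ih3 =>
    have l1 : SC sC (insert (neg a) (Δ.erase (neg a) ∪ Θ.erase (neg b))) c := by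
      refine scMono ih2 ?_
      intro x hx
      simp only [Finset.mem_insert, Finset.mem_union, Finset.mem_erase]
      tauto
    have l2 : SC sC (insert (neg b) (Δ.erase (neg a) ∪ Θ.erase (neg b))) c := by
      refine scMono ih3 ?_
      intro x hx
      simp only [Finset.mem_insert, Finset.mem_union, Finset.mem_erase]
      tauto
    have l3 := SC.negconjL l1 l2
    have l4 := scCut ih1 l3
    refine scMono l4 ?_
    intro x hx
    simp only [Finset.mem_union] at hx ⊢
    tauto
  | negdisjI h1 h2 ih1 ih2 =>
    exact SC.negdisjR (scMono ih1 Finset.subset_union_left)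
      (scMono ih2 Finset.subset_union_right)
  | @negdisjE1 Γ a b h ih =>
    exact scCut0 ih (SC.negdisjL (scId (neg a) _))
  | @negdisjE2 Γ a b h ih =>
    refine scCut0 ih (SC.negdisjL ?_)
    rw [Finset.insert_comm]
    exact scId (neg b) _

theorem sc_to_nc {Γ : Finset Fm} {α : Fm} (h : SC sC Γ α) : NC Γ α := by
  induction h with
  | init1 p Γ =>
    refine ncMono (NC.ass (var p)) ?_
    intro x hx; simp at hx; simp [hx]
  | init2 p Γ =>
    refine ncMono (NC.ass (neg (var p))) ?_
    intro x hx; simp at hx; simp [hx]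
  | cut hr h1 h2 ih1 ih2 => exact ncCutInsert ih1 ih2
  | @implL Γ Δ a b c h1 h2 ih1 ih2 =>
    have k1 : NC ({impl a b} ∪ Γ) b := NC.impE (NC.ass _) ih1
    have k2 := ncCutInsert k1 ih2
    refine ncMono k2 ?_
    intro x hx
    simp only [Finset.mem_union, Finset.mem_singleton, Finset.mem_insert] at hx ⊢
    tauto
  | @implR Γ a b h ih =>
    have := NC.impI a ih
    refine ncMono this ?_
    intro x hx
    simp only [Finset.mem_erase, Finset.mem_insert] at hx
    tauto
  | @conjL Γ a b c h ih =>
    have k1 : NC {conj a b} a := NC.conjE1 (NC.ass _)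
    have k2 : NC {conj a b} b := NC.conjE2 (NC.ass _)
    have u1 := ncCutInsert k1 ih
    have u2 := ncCut k2 u1
    refine ncMono u2 ?_
    intro x hx
    simp only [Finset.mem_union, Finset.mem_singleton, Finset.mem_erase,
      Finset.mem_insert] at hx ⊢
    tauto
  | conjR h1 h2 ih1 ih2 =>
    have := NC.conjI ih1 ih2
    simpa using this
  | @disjL Γ a b c h1 h2 ih1 ih2 =>
    have := NC.disjE (NC.ass (disj a b)) ih1 ih2
    refine ncMono this ?_
    intro x hx
    simp only [Finset.mem_union, Finset.mem_singleton, Finset.mem_erase,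
      Finset.mem_insert] at hx ⊢
    tauto
  | disjR1 h ih => exact NC.disjI1 ih
  | disjR2 h ih => exact NC.disjI2 ih
  | @negnegL Γ a c h ih =>
    have k : NC {neg (neg a)} a := NC.negnegE (NC.ass _)
    have := ncCutInsert k ih
    refine ncMono this ?_
    intro x hx
    simp only [Finset.mem_union, Finset.mem_singleton, Finset.mem_insert] at hx ⊢
    tauto
  | negnegR h ih => exact NC.negnegI ih
  | @negimplL Γ Δ a b c h1 h2 ih1 ih2 =>
    have k1 : NC ({neg (impl a b)} ∪ Γ) (neg b) := NC.negimpE (NC.ass _) ih1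
    have k2 := ncCutInsert k1 ih2
    refine ncMono k2 ?_
    intro x hx
    simp only [Finset.mem_union, Finset.mem_singleton, Finset.mem_insert] at hx ⊢
    tauto
  | @negimplR Γ a b h ih =>
    have := NC.negimpI a ih
    refine ncMono this ?_
    intro x hx
    simp only [Finset.mem_erase, Finset.mem_insert] at hx
    tauto
  | @negconjL Γ a b c h1 h2 ih1 ih2 =>
    have := NC.negconjE (NC.ass (neg (conj a b))) ih1 ih2
    refine ncMono this ?_
    intro x hx
    simp only [Finset.mem_union, Finset.mem_singleton, Finset.mem_erase,
      Finset.mem_insert] at hx ⊢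
    tauto
  | negconjR1 h ih => exact NC.negconjI1 ih
  | negconjR2 h ih => exact NC.negconjI2 ih
  | @negdisjL Γ a b c h ih =>
    have k1 : NC {neg (disj a b)} (neg a) := NC.negdisjE1 (NC.ass _)
    have k2 : NC {neg (disj a b)} (neg b) := NC.negdisjE2 (NC.ass _)
    have u1 := ncCutInsert k1 ih
    have u2 := ncCut k2 u1
    refine ncMono u2 ?_
    intro x hx
    simp only [Finset.mem_union, Finset.mem_singleton, Finset.mem_erase,
      Finset.mem_insert] at hx ⊢
    tauto
  | negdisjR h1 h2 ih1 ih2 =>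
    have := NC.negdisjI ih1 ih2
    simpa using this
  | exMid hr => simp [sC] at hr
  | peirce hr => simp [sC] at hr
  | gem hr => simp [sC] at hr
  | atEx hr => simp [sC] at hr

end Aux

/-- a formula is provable in nC iff the sequent ⇒ α is provable in sC. -/
theorem stmt12 (α : Fm) : NC ∅ α ↔ SC sC ∅ α := by
  exact ⟨nc_to_sc, sc_to_nc⟩
end
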